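/- Let C: W_0 → … → W_t be a reduced computation of the S-machine LR(Y) with the standard base Q^{(1)} P Q^{(2)}. Then: (1) if |W_i|_Y > |W_{i-1}|_Y for some i with 1 ≤ i ≤ t−1, then |W_{i+1}|_Y > |W_i|_Y; (2) |W_i|_Y ≤ max(|W_0|_Y, |W_t|_Y) for every i = 0, 1, …, t. -/

import Mathlib

namespace LR

/-- The rules of the `S`-machine `LR(Y)`: `z1 a = ζ⁽¹⁾(a)`, `z12 = ζ⁽¹²⁾` and
`z2 a = ζ⁽²⁾(a)`.  A signed rule `(r, ε) : LRRule Y × Bool` is the rule `r` if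
`ε = true` and its inverse if `ε = false`. -/
inductive LRRule (Y : Type) : Type
  | z1 : Y → LRRule Y
  | z12 : LRRule Y
  | z2 : Y → LRRule Y

/-- A configuration of `LR(Y)` with the standard base `Q⁽¹⁾ P Q⁽²⁾`:
`st = false` means the running state letter is `p⁽¹⁾`, `st = true` means it is `p⁽²⁾`;
`uL` is the tape word of the `Q⁽¹⁾P`-sector (a reduced word in `Y⁽¹⁾`, identified
with `Y`), and `uR` is the tape word of the `PQ⁽²⁾`-sector (a reduced word in `Y⁽²⁾`,
identified with `Y` via `a ↦ a'`). -/
structure Config (Y : Type) where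
  st : Bool
  uL : FreeGroup Y
  uR : FreeGroup Y

variable {Y : Type}

/-- the `Y`-length `|W|_Y` of a configuration -/
def lenY [DecidableEq Y] (W : Config Y) : ℕ :=
  W.uL.toWord.length + W.uR.toWord.length

/-- One application of a (signed) rule of `LR(Y)`. -/
def Step (r : LRRule Y × Bool) (W W' : Config Y) : Prop :=
  match r with
  | (LRRule.z1 a, true) => W.st = false ∧ W'.st = false ∧
      W'.uL = W.uL * (FreeGroup.of a)⁻¹ ∧ W'.uR = FreeGroup.of a * W.uR
  | (LRRule.z1 a, false) => W.st = false ∧ W'.st = false ∧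
      W'.uL = W.uL * FreeGroup.of a ∧ W'.uR = (FreeGroup.of a)⁻¹ * W.uR
  | (LRRule.z12, true) => W.st = false ∧ W.uL = 1 ∧
      W'.st = true ∧ W'.uL = 1 ∧ W'.uR = W.uR
  | (LRRule.z12, false) => W.st = true ∧ W.uL = 1 ∧
      W'.st = false ∧ W'.uL = 1 ∧ W'.uR = W.uR
  | (LRRule.z2 a, true) => W.st = true ∧ W'.st = true ∧
      W'.uL = W.uL * FreeGroup.of a ∧ W'.uR = (FreeGroup.of a)⁻¹ * W.uR
  | (LRRule.z2 a, false) => W.st = true ∧ W'.st = true ∧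
      W'.uL = W.uL * (FreeGroup.of a)⁻¹ ∧ W'.uR = FreeGroup.of a * W.uR

end LR

namespace LRPrim
open LR FreeGroup

variable {Y : Type} [DecidableEq Y]

abbrev sg (x : Y × Bool) : FreeGroup Y := FreeGroup.mk [x]

def xinv (x : Y × Bool) : Y × Bool := (x.1, !x.2)

omit [DecidableEq Y] in
lemma xinv_xinv (x : Y × Bool) : xinv (xinv x) = x := by simp [xinv]

omit [DecidableEq Y] in
lemma sg_inv (x : Y × Bool) : (sg x)⁻¹ = sg (xinv x) := by rw [FreeGroup.inv_mk]; rfl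

/-- the letter by which a non-`z12` rule multiplies `uL` on the right -/
def ltr : LRRule Y × Bool → Option (Y × Bool)
  | (LRRule.z1 a, true) => some (a, false)
  | (LRRule.z1 a, false) => some (a, true)
  | (LRRule.z12, _) => none
  | (LRRule.z2 a, true) => some (a, true)
  | (LRRule.z2 a, false) => some (a, false)

omit [DecidableEq Y] in
lemma step_none {r : LRRule Y × Bool} {W W' : Config Y} (h : Step r W W')
    (hn : ltr r = none) : W.uL = 1 ∧ W'.uL = 1 ∧ W'.uR = W.uR := by
  obtain ⟨rr, e⟩ := r
  cases rr <;> cases e <;> simp only [ltr] at hn <;>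
    first
    | exact ⟨h.2.1, h.2.2.2.1, h.2.2.2.2⟩
    | cases hn

omit [DecidableEq Y] in
lemma of_eq_sg (a : Y) : FreeGroup.of a = sg (a, true) := rfl

omit [DecidableEq Y] in
lemma invRev_single (x : Y × Bool) : FreeGroup.invRev [x] = [xinv x] := rfl

omit [DecidableEq Y] in
lemma step_some {r : LRRule Y × Bool} {W W' : Config Y} {x : Y × Bool} (h : Step r W W')
    (hx : ltr r = some x) :
    W'.uL⁻¹ = sg (xinv x) * W.uL⁻¹ ∧ W'.uR = sg (xinv x) * W.uR := by
  obtain ⟨rr, e⟩ := r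
  cases rr <;> cases e <;> simp only [ltr, Option.some.injEq] at hx <;>
    first
    | contradiction
    | (subst hx
       obtain ⟨-, -, hL, hR⟩ := h
       refine ⟨?_, ?_⟩ <;>
         simp [hL, hR, xinv, mul_inv_rev, of_eq_sg, sg_inv, FreeGroup.inv_mk, invRev_single])

lemma inv_rule {r1 r2 : LRRule Y × Bool} {x : Y × Bool} {W0 W1 W2 : Config Y}
    (h1 : Step r1 W0 W1) (h2 : Step r2 W1 W2)
    (hx : ltr r1 = some x) (hy : ltr r2 = some (xinv x)) :
    r2 = (r1.1, !r1.2) := by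
  obtain ⟨s1, e1⟩ := r1; obtain ⟨s2, e2⟩ := r2
  cases s1 <;> cases s2 <;> cases e1 <;> cases e2 <;>
    simp only [ltr, Option.some.injEq] at hx hy <;>
    first
    | contradiction
    | contradiction
    | (subst hx; simp_all [Step, xinv])


lemma toWord_sg_mul (x : Y × Bool) (w : FreeGroup Y) :
    (sg x * w).toWord = FreeGroup.reduce (x :: w.toWord) := by
  conv_lhs => rw [← FreeGroup.mk_toWord (x := w)]
  rw [FreeGroup.mul_mk, FreeGroup.toWord_mk]; rfl

lemma sg_mul_cases (x : Y × Bool) (w : FreeGroup Y) :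
    (sg x * w).toWord = x :: w.toWord ∨
    (w.toWord.head? = some (xinv x) ∧ (sg x * w).toWord = w.toWord.tail) := by
  rw [toWord_sg_mul, FreeGroup.reduce.cons, FreeGroup.reduce_toWord]
  cases h : w.toWord with
  | nil => left; rfl
  | cons hd tl =>
    by_cases hc : x.1 = hd.1 ∧ x.2 = !hd.2
    · right
      constructor
      · obtain ⟨h1, h2⟩ := hc
        have : hd = (x.1, !x.2) := by
          obtain ⟨a, b⟩ := hd; obtain ⟨c, d⟩ := x
          simp_all
        simp [this, xinv]
      · simp [hc]
    · left; simp [hc]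

lemma sg_mul_len (x : Y × Bool) (w : FreeGroup Y) :
    (sg x * w).toWord.length = w.toWord.length + 1 ∨
    ((sg x * w).toWord.length + 1 = w.toWord.length ∧
      w.toWord.head? = some (xinv x)) := by
  rcases sg_mul_cases x w with h | ⟨h1, h2⟩
  · left; rw [h]; rfl
  · right
    refine ⟨?_, h1⟩
    cases hw : w.toWord with
    | nil => rw [hw] at h1; simp at h1
    | cons hd tl => rw [h2, hw]; simp

lemma sg_mul_inc (x : Y × Bool) (w : FreeGroup Y)
    (h : w.toWord.length < (sg x * w).toWord.length) :
    (sg x * w).toWord.length = w.toWord.length + 1 ∧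
      (sg x * w).toWord.head? = some x := by
  rcases sg_mul_cases x w with hc | ⟨h1, h2⟩
  · exact ⟨by rw [hc]; rfl, by rw [hc]; rfl⟩
  · exfalso
    rw [h2] at h
    have := List.length_tail (l := w.toWord)
    omega

lemma sg_mul_nocancel (x : Y × Bool) (w : FreeGroup Y)
    (h : w.toWord.head? ≠ some (xinv x)) :
    (sg x * w).toWord.length = w.toWord.length + 1 := by
  rcases sg_mul_cases x w with hc | ⟨h1, h2⟩
  · rw [hc]; rfl
  · exact absurd h1 h

lemma lenY_eq (W : Config Y) :
    lenY W = (W.uL⁻¹).toWord.length + W.uR.toWord.length := by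
  rw [lenY, FreeGroup.toWord_inv, FreeGroup.invRev_length]

lemma key_step {r1 r2 : LRRule Y × Bool} {W0 W1 W2 : Config Y}
    (h1 : Step r1 W0 W1) (h2 : Step r2 W1 W2)
    (hne : r2 ≠ (r1.1, !r1.2))
    (hlt : lenY W0 < lenY W1) : lenY W1 < lenY W2 := by
  cases hx : ltr r1 with
  | none =>
    obtain ⟨hL0, hL1, hR⟩ := step_none h1 hx
    rw [lenY, lenY, hL0, hL1, hR] at hlt
    exact absurd hlt (lt_irrefl _)
  | some x =>
    obtain ⟨hA, hB⟩ := step_some h1 hx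
    have eA := sg_mul_len (xinv x) (W0.uL⁻¹)
    have eB := sg_mul_len (xinv x) W0.uR
    rw [← hA] at eA
    rw [← hB] at eB
    rw [lenY_eq, lenY_eq] at hlt
    have incA : (W1.uL⁻¹).toWord.length = (W0.uL⁻¹).toWord.length + 1 := by
      rcases eA with h | ⟨h, -⟩ <;> rcases eB with h' | ⟨h', -⟩ <;> omega
    have incB : W1.uR.toWord.length = W0.uR.toWord.length + 1 := by
      rcases eA with h | ⟨h, -⟩ <;> rcases eB with h' | ⟨h', -⟩ <;> omega
    have headA : (W1.uL⁻¹).toWord.head? = some (xinv x) := by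
      rw [hA]; exact (sg_mul_inc _ _ (by rw [← hA]; omega)).2
    have headB : W1.uR.toWord.head? = some (xinv x) := by
      rw [hB]; exact (sg_mul_inc _ _ (by rw [← hB]; omega)).2
    cases hy : ltr r2 with
    | none =>
      obtain ⟨hW1L, -, -⟩ := step_none h2 hy
      rw [hW1L] at incA
      simp at incA
    | some y =>
      obtain ⟨hA2, hB2⟩ := step_some h2 hy
      have hyx : y ≠ xinv x := by
        intro hE
        exact hne (inv_rule h1 h2 hx (by rw [hy, hE]))
      have hncA : (W1.uL⁻¹).toWord.head? ≠ some (xinv (xinv y)) := by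
        rw [headA, xinv_xinv]
        intro hc
        exact hyx (Option.some.inj hc).symm
      have hncB : W1.uR.toWord.head? ≠ some (xinv (xinv y)) := by
        rw [headB, xinv_xinv]
        intro hc
        exact hyx (Option.some.inj hc).symm
      have lA : (W2.uL⁻¹).toWord.length = (W1.uL⁻¹).toWord.length + 1 := by
        rw [hA2]; exact sg_mul_nocancel _ _ hncA
      have lB : W2.uR.toWord.length = W1.uR.toWord.length + 1 := by
        rw [hB2]; exact sg_mul_nocancel _ _ hncB
      rw [lenY_eq W1, lenY_eq W2]
      omega

end LRPrim

open LR in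
/-- Lemma `prim` (1), (2): in a reduced computation of `LR(Y)` with the standard base,
once the `Y`-length increases it keeps increasing, and every configuration satisfies
`|W_i|_Y ≤ max(|W_0|_Y, |W_t|_Y)`. -/
theorem lr_prim_monotone {Y : Type} [DecidableEq Y]
    (t : ℕ) (W : Fin (t + 1) → Config Y) (hist : Fin t → LRRule Y × Bool)
    (hstep : ∀ i : Fin t, Step (hist i) (W i.castSucc) (W i.succ))
    (hred : ∀ (i : ℕ) (hi : i + 1 < t),
      hist ⟨i + 1, hi⟩ ≠ ((hist ⟨i, by omega⟩).1, !(hist ⟨i, by omega⟩).2)) :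
    -- (1)
    (∀ (i : ℕ) (hi : i + 2 ≤ t),
      lenY (W ⟨i, by omega⟩) < lenY (W ⟨i + 1, by omega⟩) →
      lenY (W ⟨i + 1, by omega⟩) < lenY (W ⟨i + 2, by omega⟩)) ∧
    -- (2)
    (∀ i : Fin (t + 1), lenY (W i) ≤ max (lenY (W 0)) (lenY (W (Fin.last t)))) := by

  classical
  have part1 : ∀ (i : ℕ) (hi : i + 2 ≤ t),
      lenY (W ⟨i, by omega⟩) < lenY (W ⟨i + 1, by omega⟩) →
      lenY (W ⟨i + 1, by omega⟩) < lenY (W ⟨i + 2, by omega⟩) := by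
    intro i hi hlt
    have s1 : Step (hist ⟨i, by omega⟩) (W ⟨i, by omega⟩) (W ⟨i + 1, by omega⟩) :=
      hstep ⟨i, by omega⟩
    have s2 : Step (hist ⟨i + 1, by omega⟩) (W ⟨i + 1, by omega⟩) (W ⟨i + 2, by omega⟩) :=
      hstep ⟨i + 1, by omega⟩
    exact LRPrim.key_step s1 s2 (hred i (by omega)) hlt
  refine ⟨part1, ?_⟩
  have inc_chain : ∀ (j : ℕ) (hj : j + 1 ≤ t),
      lenY (W ⟨j, by omega⟩) < lenY (W ⟨j + 1, by omega⟩) →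
      ∀ (k : ℕ), j ≤ k → ∀ (hk : k + 1 ≤ t),
        lenY (W ⟨k, by omega⟩) < lenY (W ⟨k + 1, by omega⟩) := by
    intro j hj hinc k
    induction k with
    | zero =>
      intro hjk hk
      have h0 : j = 0 := Nat.le_zero.mp hjk
      subst h0
      exact hinc
    | succ n ih =>
      intro hjk hk
      rcases Nat.lt_or_ge j (n + 1) with h | h
      · exact part1 n (by omega) (ih (by omega) (by omega))
      · have hj1 : j = n + 1 := by omega
        subst hj1
        exact hinc
  have mono_up : ∀ (j : ℕ) (hj : j + 1 ≤ t),
      lenY (W ⟨j, by omega⟩) < lenY (W ⟨j + 1, by omega⟩) →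
      ∀ (d m : ℕ) (hm : m + d = t), j ≤ m →
        lenY (W ⟨m, by omega⟩) ≤ lenY (W ⟨t, by omega⟩) := by
    intro j hj hinc d
    induction d with
    | zero =>
      intro m hm hjm
      subst hm
      exact le_refl _
    | succ n ih =>
      intro m hm hjm
      have h1 : lenY (W ⟨m, by omega⟩) < lenY (W ⟨m + 1, by omega⟩) :=
        inc_chain j hj hinc m hjm (by omega)
      have h2 : lenY (W ⟨m + 1, by omega⟩) ≤ lenY (W ⟨t, by omega⟩) :=
        ih (m + 1) (by omega) (by omega)
      omega
  have mono_down : ∀ (m : ℕ) (hm : m ≤ t),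
      (∀ (j : ℕ) (hj : j + 1 ≤ m),
        ¬ lenY (W ⟨j, by omega⟩) < lenY (W ⟨j + 1, by omega⟩)) →
      lenY (W ⟨m, by omega⟩) ≤ lenY (W ⟨0, by omega⟩) := by
    intro m
    induction m with
    | zero => intro _ _; exact le_refl _
    | succ n ih =>
      intro hm hni
      have h1 : ¬ lenY (W ⟨n, by omega⟩) < lenY (W ⟨n + 1, by omega⟩) :=
        hni n (by omega)
      have h2 : lenY (W ⟨n, by omega⟩) ≤ lenY (W ⟨0, by omega⟩) :=
        ih (by omega) (fun j hj => hni j (by omega))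
      omega
  intro i
  obtain ⟨n, hn⟩ := i
  have h0 : (0 : Fin (t + 1)) = ⟨0, by omega⟩ := rfl
  have hl : Fin.last t = ⟨t, by omega⟩ := rfl
  rw [h0, hl]
  by_cases hE : ∃ j : ℕ, ∃ hj : j + 1 ≤ n,
      lenY (W ⟨j, by omega⟩) < lenY (W ⟨j + 1, by omega⟩)
  · obtain ⟨j, hj, hinc⟩ := hE
    have hmu := mono_up j (by omega) hinc (t - n) n (by omega) (by omega)
    exact le_trans hmu (le_max_right _ _)
  · push_neg at hE
    have hmd := mono_down n (by omega) (fun j hj => not_lt.mpr (hE j hj))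
    exact le_trans hmd (le_max_left _ _)
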